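/- Lower bound on trace-distance contraction under local qubit depolarizing noise: let 0 ≤ p < 1/2 and let D_p be the qubit depolarizing channel D_p(ρ) = (1−p)ρ + p·Tr(ρ)·I/2. Then for any two density operators ρ, σ on k qubits, ‖ρ − σ‖₁ ≤ (1/(1−2p))^k · ‖D_p^{⊗k}(ρ) − D_p^{⊗k}(σ)‖₁. Consequently, for a circuit A = D_p^{⊗k} ∘ U_n ∘ ⋯ ∘ D_p^{⊗k} ∘ U_1 with n layers in which each U_i acts as conjugation by a unitary, E₁(A(ρ)‖A(σ)) ≥ (1/2)·(1−2p)^{kn}·‖ρ − σ‖₁. -/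

import Mathlib

open scoped BigOperators ComplexOrder

/-- Trace of the positive part of a Hermitian matrix (0 if not Hermitian). -/
noncomputable def posPartTrace {n : Type*} [Fintype n] [DecidableEq n]
    (X : Matrix n n ℂ) : ℝ :=
  if h : X.IsHermitian then ∑ i, max (h.eigenvalues i) 0 else 0

/-- The quantum hockey-stick divergence `E_γ(ρ‖σ) = Tr[(ρ - γσ)₊]`. -/
noncomputable def hsDiv {n : Type*} [Fintype n] [DecidableEq n]
    (γ : ℝ) (ρ σ : Matrix n n ℂ) : ℝ :=
  posPartTrace (ρ - (γ : ℂ) • σ)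

/-- A density operator: positive semidefinite with unit trace. -/
def IsDensity {n : Type*} [Fintype n] [DecidableEq n] (ρ : Matrix n n ℂ) : Prop :=
  ρ.PosSemidef ∧ ρ.trace = 1

/-- Trace norm: the sum of the singular values. -/
noncomputable def traceNorm {n : Type*} [Fintype n] [DecidableEq n]
    (X : Matrix n n ℂ) : ℝ :=
  ∑ i, Real.sqrt ((Matrix.posSemidef_conjTranspose_mul_self X).isHermitian.eigenvalues i)

/-- Completely positive trace-preserving linear map. -/
def IsCPTP {n m : Type*} [Fintype n] [DecidableEq n] [Fintype m] [DecidableEq m]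
    (Φ : Matrix n n ℂ →ₗ[ℂ] Matrix m m ℂ) : Prop :=
  (∀ k : ℕ, ∀ X : Matrix (Fin k × n) (Fin k × n) ℂ, X.PosSemidef →
      (Matrix.of fun p q : Fin k × m =>
        Φ (Matrix.of fun i j => X (p.1, i) (q.1, j)) p.2 q.2).PosSemidef) ∧
  (∀ X, (Φ X).trace = X.trace)

/-- Contraction coefficient of a channel for the hockey-stick divergence. -/
noncomputable def contractionCoeff {n : Type*} [Fintype n] [DecidableEq n]
    (γ : ℝ) (Φ : Matrix n n ℂ →ₗ[ℂ] Matrix n n ℂ) : ℝ :=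
  sSup {x : ℝ | ∃ ρ σ : Matrix n n ℂ, IsDensity ρ ∧ IsDensity σ ∧
    0 < hsDiv γ ρ σ ∧ x = hsDiv γ (Φ ρ) (Φ σ) / hsDiv γ ρ σ}

/-- The depolarizing channel with parameter `p` acting on site `j` of a composite system
of `k` subsystems, each of dimension `D`:
`ρ ↦ (1-p) ρ + p (Tr_j ρ) ⊗_j (I/D)`. -/
noncomputable def depolSite (D k : ℕ) (p : ℝ) (j : Fin k) :
    Matrix (Fin k → Fin D) (Fin k → Fin D) ℂ →ₗ[ℂ]
      Matrix (Fin k → Fin D) (Fin k → Fin D) ℂ where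
  toFun X := Matrix.of fun a b =>
    (1 - (p : ℂ)) * X a b +
      ((p : ℂ) / D) * (if a j = b j then
        ∑ s : Fin D, X (Function.update a j s) (Function.update b j s) else 0)
  map_add' X Y := by
    ext a b
    by_cases h : a j = b j <;>
      simp [h, Matrix.add_apply, Finset.sum_add_distrib, mul_add] <;> ring
  map_smul' c X := by
    ext a b
    by_cases h : a j = b j <;>
      simp [h, Matrix.smul_apply, Finset.mul_sum, smul_eq_mul, mul_add] <;> ring

/-- The `k`-fold tensor power `D_p^{⊗k}` of the depolarizing channel, realized as the
composition of the single-site depolarizing channels on all `k` sites. -/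
noncomputable def depolPow (D k : ℕ) (p : ℝ) :
    Matrix (Fin k → Fin D) (Fin k → Fin D) ℂ →ₗ[ℂ]
      Matrix (Fin k → Fin D) (Fin k → Fin D) ℂ :=
  (List.finRange k).foldl (fun acc j => depolSite D k p j ∘ₗ acc) LinearMap.id

/-- The noisy unitary circuit `A = D_p^{⊗k} ∘ U_n ∘ ⋯ ∘ D_p^{⊗k} ∘ U_1` on `k` qubits,
where each layer acts by conjugation with the unitary `U i`. -/
noncomputable def noisyUnitaryCircuit (k n : ℕ) (p : ℝ)
    (U : Fin n → Matrix (Fin k → Fin 2) (Fin k → Fin 2) ℂ)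
    (ρ : Matrix (Fin k → Fin 2) (Fin k → Fin 2) ℂ) :
    Matrix (Fin k → Fin 2) (Fin k → Fin 2) ℂ :=
  (List.finRange n).foldl (fun X i => depolPow 2 k p (U i * X * (U i).conjTranspose)) ρ

/-!
Write `T_j X = (Tr_j X) ⊗ 1` for tracing out site `j` and putting the identity back, so that the
single-site channel is `Φ_j = (1 - p) id + (p / D) T_j`. Since `T_j ∘ T_j = D T_j`, it inverts as
`(1 - p) X = Φ_j X - (p / D) T_j (Φ_j X)`. Splitting `Φ_j X = P - N` into positive and negative
parts, and using that `T_j` is positive and multiplies traces by `D`, this writes `(1 - p) X` as a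
difference of positive matrices of total trace `(1 + p) ‖Φ_j X‖₁`. The trace norm of a Hermitian
matrix is the least total trace of such a difference, hence `(1 - p) ‖X‖₁ ≤ (1 + p) ‖Φ_j X‖₁`,
and `(1 + p) / (1 - p) ≤ 1 / (1 - 2p)`. Iterating over the `k` sites and the `n` layers (the trace
norm is unitarily invariant) gives both bounds, since `E₁(ρ‖σ) = ‖ρ - σ‖₁ / 2` for states.
-/

open Matrix

namespace List

variable {α ι : Type*} {P : α → Prop} {g : ι → α → α}

theorem foldl_induction (hP : ∀ i x, P x → P (g i x)) (l : List ι) {x : α} (hx : P x) :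
    P (l.foldl (fun y i => g i y) x) := by
  induction l generalizing x with
  | nil => exact hx
  | cons i l ih => exact ih (hP i x hx)

theorem le_pow_length_mul_foldl (f : α → ℝ) {c : ℝ} (hc : 0 ≤ c) (hP : ∀ i x, P x → P (g i x))
    (hf : ∀ i x, P x → f x ≤ c * f (g i x)) (l : List ι) {x : α} (hx : P x) :
    f x ≤ c ^ l.length * f (l.foldl (fun y i => g i y) x) := by
  induction l generalizing x with
  | nil => simp
  | cons i l ih =>
    calc f x ≤ c * f (g i x) := hf i x hx
      _ ≤ c * (c ^ l.length * f (l.foldl (fun y i => g i y) (g i x))) :=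
        mul_le_mul_of_nonneg_left (ih (hP i x hx)) hc
      _ = c ^ (i :: l).length * f ((i :: l).foldl (fun y i => g i y) x) := by
        rw [length_cons, pow_succ', mul_assoc, foldl_cons]

theorem foldl_sub {M : Type*} [Sub M] {g : ι → M → M}
    (hg : ∀ i x y, g i (x - y) = g i x - g i y) (l : List ι) (x y : M) :
    l.foldl (fun z i => g i z) x - l.foldl (fun z i => g i z) y =
      l.foldl (fun z i => g i z) (x - y) := by
  induction l generalizing x y with
  | nil => rfl
  | cons i l ih => simp only [foldl_cons, ih, hg]

end List

theorem Fintype.sum_sum_update {ι d : Type*} [Fintype ι] [DecidableEq ι] [Fintype d] (j : ι)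
    (f : (ι → d) → ℂ) :
    ∑ a, ∑ s : d, f (Function.update a j s) = Fintype.card d * ∑ a, f a := by
  have hinv : Function.Involutive fun q : (ι → d) × d => (Function.update q.1 j q.2, q.1 j) := by
    rintro ⟨a, s⟩
    simp
  rw [← Fintype.sum_prod_type', Fintype.sum_bijective _ hinv.bijective
    (fun q => f (Function.update q.1 j q.2)) (fun q => f q.1) fun _ => rfl,
    Fintype.sum_prod_type]
  simp [Finset.mul_sum]

namespace Matrix

variable {n : Type*} [Fintype n] [DecidableEq n] {A B X : Matrix n n ℂ}

lemma PosSemidef.trace_mul_nonneg (hA : A.PosSemidef) (hB : B.PosSemidef) :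
    0 ≤ (A * B).trace := by
  open scoped MatrixOrder in
  obtain ⟨C, rfl⟩ := CStarAlgebra.nonneg_iff_eq_star_mul_self.mp hB.nonneg
  rw [star_eq_conjTranspose, ← mul_assoc, trace_mul_comm, ← mul_assoc]
  exact (hA.mul_mul_conjTranspose_same C).trace_nonneg

lemma IsHermitian.trace_cfc (hX : X.IsHermitian) (f : ℝ → ℝ) :
    (cfc f X).trace = ∑ i, (f (hX.eigenvalues i) : ℂ) := by
  rw [hX.cfc_eq, IsHermitian.cfc, Unitary.conjStarAlgAut_apply, trace_mul_cycle,
    Unitary.coe_star_mul_self, one_mul, trace_diagonal]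
  rfl

lemma IsHermitian.posSemidef_cfc (hX : X.IsHermitian) {f : ℝ → ℝ}
    (hf : ∀ i, 0 ≤ f (hX.eigenvalues i)) : (cfc f X).PosSemidef := by
  open scoped MatrixOrder in
  refine nonneg_iff_posSemidef.mp (cfc_nonneg fun x hx => ?_)
  obtain ⟨i, rfl⟩ := hX.spectrum_real_eq_range_eigenvalues ▸ hx
  exact hf i

lemma trace_unitary_conj {U : Matrix n n ℂ} (hU : U ∈ unitaryGroup n ℂ) (M : Matrix n n ℂ) :
    (U * M * Uᴴ).trace = M.trace := by
  rw [trace_mul_cycle, ← star_eq_conjTranspose, hU.1, one_mul]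

end Matrix

section TraceNorm

variable {n : Type*} [Fintype n] [DecidableEq n] {A B X : Matrix n n ℂ}

lemma traceNorm_nonneg (X : Matrix n n ℂ) : 0 ≤ traceNorm X :=
  Finset.sum_nonneg fun _ _ => Real.sqrt_nonneg _

lemma traceNorm_eq_sum_abs_eigenvalues (hX : X.IsHermitian) :
    traceNorm X = ∑ i, |hX.eigenvalues i| := by
  have hsqrt : cfc Real.sqrt (Xᴴ * X) = cfc (fun x : ℝ => |x|) X := by
    rw [hX.eq, ← sq, ← cfc_pow_id (R := ℝ) X 2 hX.isSelfAdjoint, ← cfc_comp Real.sqrt (· ^ 2) X]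
    exact cfc_congr fun x _ => Real.sqrt_sq_eq_abs x
  have htr := congrArg trace hsqrt
  rw [(posSemidef_conjTranspose_mul_self X).isHermitian.trace_cfc, hX.trace_cfc] at htr
  exact_mod_cast htr

lemma exists_posSemidef_sub_eq_traceNorm (hX : X.IsHermitian) :
    ∃ P N : Matrix n n ℂ, P.PosSemidef ∧ N.PosSemidef ∧ X = P - N ∧
      traceNorm X = P.trace.re + N.trace.re := by
  refine ⟨cfc (fun x : ℝ => x⁺) X, cfc (fun x : ℝ => x⁻) X,
    hX.posSemidef_cfc fun _ => posPart_nonneg _, hX.posSemidef_cfc fun _ => negPart_nonneg _,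
    ?_, ?_⟩
  · rw [← cfc_sub (f := fun x : ℝ => x⁺) (g := fun x : ℝ => x⁻)]
    simp only [posPart_sub_negPart]
    exact (cfc_id' ℝ X).symm
  · rw [traceNorm_eq_sum_abs_eigenvalues hX, hX.trace_cfc, hX.trace_cfc, Complex.re_sum,
      Complex.re_sum, ← Finset.sum_add_distrib]
    simp only [Complex.ofReal_re, posPart_add_negPart]

lemma traceNorm_le_of_eq_sub (hA : A.PosSemidef) (hB : B.PosSemidef) (hX : X = A - B) :
    traceNorm X ≤ A.trace.re + B.trace.re := by
  have hXh : X.IsHermitian := hX ▸ hA.isHermitian.sub hB.isHermitian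
  have hcont (f : ℝ → ℝ) : ContinuousOn f (spectrum ℝ X) := X.finite_real_spectrum.continuousOn f
  have hsgn_le (x : ℝ) : (SignType.sign x : ℝ) ≤ 1 := by cases SignType.sign x <;> norm_num
  have hsgn_ge (x : ℝ) : -1 ≤ (SignType.sign x : ℝ) := by cases SignType.sign x <;> norm_num
  set sgn : ℝ → ℝ := fun x => (SignType.sign x : ℝ)
  -- `‖X‖₁ = Re tr (X S)` for the sign `S` of `X`, and `1 ∓ S ⪰ 0` bounds the two halves.
  set S := cfc sgn X
  have hXS : X * S = cfc (fun x : ℝ => |x|) X := by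
    rw [← cfc_id' ℝ X, ← cfc_mul _ _ X (hcont _) (hcont _), cfc_id' ℝ X]
    exact cfc_congr fun x _ => self_mul_sign x
  have hS_le : (1 - S).PosSemidef := by
    rw [← cfc_one ℝ X, ← cfc_sub (f := 1) (g := sgn) (hf := hcont _) (hg := hcont _)]
    exact hXh.posSemidef_cfc fun i => sub_nonneg.mpr (hsgn_le _)
  have hS_ge : (1 + S).PosSemidef := by
    rw [← cfc_one ℝ X, ← cfc_add (a := X) 1 sgn (hcont _) (hcont _)]
    exact hXh.posSemidef_cfc fun i => neg_le_iff_add_nonneg'.mp (hsgn_ge _)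
  have hA' := (Complex.nonneg_iff.mp (hA.trace_mul_nonneg hS_le)).1
  have hB' := (Complex.nonneg_iff.mp (hB.trace_mul_nonneg hS_ge)).1
  have htn : traceNorm X = (X * S).trace.re := by
    rw [hXS, hXh.trace_cfc, Complex.re_sum, traceNorm_eq_sum_abs_eigenvalues hXh]
    simp only [Complex.ofReal_re]
  rw [htn, hX, sub_mul, trace_sub, Complex.sub_re]
  simp only [mul_sub, mul_add, mul_one, trace_sub, trace_add, Complex.sub_re,
    Complex.add_re] at hA' hB'
  linarith

lemma posPartTrace_eq (hX : X.IsHermitian) :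
    posPartTrace X = (traceNorm X + X.trace.re) / 2 := by
  rw [posPartTrace, dif_pos hX, traceNorm_eq_sum_abs_eigenvalues hX,
    hX.trace_eq_sum_eigenvalues, Complex.re_sum, ← Finset.sum_add_distrib, Finset.sum_div]
  refine Finset.sum_congr rfl fun i _ => ?_
  simp only [Complex.coe_algebraMap, Complex.ofReal_re]
  rcases le_total 0 (hX.eigenvalues i) with h | h
  · rw [max_eq_left h, abs_of_nonneg h]; ring
  · rw [max_eq_right h, abs_of_nonpos h]; ring

lemma traceNorm_unitary_conj_le {U : Matrix n n ℂ} (hU : U ∈ unitaryGroup n ℂ)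
    (hX : X.IsHermitian) : traceNorm (U * X * Uᴴ) ≤ traceNorm X := by
  obtain ⟨P, N, hP, hN, rfl, htn⟩ := exists_posSemidef_sub_eq_traceNorm hX
  rw [htn, ← trace_unitary_conj hU P, ← trace_unitary_conj hU N]
  exact traceNorm_le_of_eq_sub (hP.mul_mul_conjTranspose_same U)
    (hN.mul_mul_conjTranspose_same U) (by noncomm_ring)

lemma traceNorm_unitary_conj {U : Matrix n n ℂ} (hU : U ∈ unitaryGroup n ℂ)
    (hX : X.IsHermitian) : traceNorm (U * X * Uᴴ) = traceNorm X := by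
  refine le_antisymm (traceNorm_unitary_conj_le hU hX) ?_
  have hcancel : Uᴴ * (U * X * Uᴴ) * Uᴴᴴ = X := by
    rw [conjTranspose_conjTranspose, ← star_eq_conjTranspose]
    simp only [← mul_assoc, Unitary.star_mul_self_of_mem hU, one_mul]
    rw [mul_assoc, Unitary.star_mul_self_of_mem hU, mul_one]
  simpa only [hcancel] using traceNorm_unitary_conj_le (U := Uᴴ) (Unitary.star_mem hU)
    (isHermitian_mul_mul_conjTranspose U hX)

end TraceNorm

section TraceOutSite

variable {ι d : Type*} [DecidableEq ι] [Fintype d] [DecidableEq d]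

/-- `X ↦ (Tr_j X) ⊗ 1`: trace out site `j` and put the identity there. -/
noncomputable def traceOutSite (j : ι) :
    Matrix (ι → d) (ι → d) ℂ →ₗ[ℂ] Matrix (ι → d) (ι → d) ℂ where
  toFun X := Matrix.of fun a b =>
    if a j = b j then ∑ s : d, X (Function.update a j s) (Function.update b j s) else 0
  map_add' X Y := by
    ext a b
    by_cases h : a j = b j <;> simp [h, Finset.sum_add_distrib]
  map_smul' c X := by
    ext a b
    by_cases h : a j = b j <;> simp [h, Finset.mul_sum]

lemma traceOutSite_apply (j : ι) (X : Matrix (ι → d) (ι → d) ℂ) (a b : ι → d) :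
    traceOutSite j X a b =
      if a j = b j then ∑ s : d, X (Function.update a j s) (Function.update b j s) else 0 :=
  rfl

/-- `|t⟩⟨s|` at site `j`, identity elsewhere. -/
noncomputable def siteTransition [Fintype ι] (j : ι) (t s : d) : Matrix (ι → d) (ι → d) ℂ :=
  Matrix.of fun a c => if a j = t ∧ c = Function.update a j s then 1 else 0

lemma siteTransition_mul_mul_conjTranspose_apply [Fintype ι] (j : ι) (t s : d)
    (X : Matrix (ι → d) (ι → d) ℂ) (a b : ι → d) :
    (siteTransition j t s * X * (siteTransition j t s)ᴴ) a b =
      if a j = t ∧ b j = t then X (Function.update a j s) (Function.update b j s) else 0 := by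
  by_cases ha : a j = t <;> by_cases hb : b j = t <;>
    simp [siteTransition, Matrix.mul_apply, ha, hb]

lemma traceOutSite_eq_sum [Fintype ι] (j : ι) (X : Matrix (ι → d) (ι → d) ℂ) :
    traceOutSite j X = ∑ s, ∑ t, siteTransition j t s * X * (siteTransition j t s)ᴴ := by
  ext a b
  simp only [traceOutSite_apply, Matrix.sum_apply, siteTransition_mul_mul_conjTranspose_apply]
  by_cases h : a j = b j
  · simp [h]
  · simp only [h, if_false]
    refine (Finset.sum_eq_zero fun s _ => Finset.sum_eq_zero fun t _ => ?_).symm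
    rw [if_neg fun hab => h (hab.1.trans hab.2.symm)]

lemma traceOutSite_posSemidef [Fintype ι] (j : ι) {X : Matrix (ι → d) (ι → d) ℂ}
    (hX : X.PosSemidef) : (traceOutSite j X).PosSemidef := by
  rw [traceOutSite_eq_sum]
  exact posSemidef_sum _ fun s _ => posSemidef_sum _ fun t _ => hX.mul_mul_conjTranspose_same _

lemma traceOutSite_isHermitian [Fintype ι] (j : ι) {X : Matrix (ι → d) (ι → d) ℂ}
    (hX : X.IsHermitian) : (traceOutSite j X).IsHermitian := by
  rw [traceOutSite_eq_sum]
  exact isSelfAdjoint_sum _ fun s _ => isSelfAdjoint_sum _ fun t _ =>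
    isHermitian_mul_mul_conjTranspose _ hX

lemma trace_traceOutSite [Fintype ι] (j : ι) (X : Matrix (ι → d) (ι → d) ℂ) :
    (traceOutSite j X).trace = Fintype.card d * X.trace := by
  simp only [trace, diag, traceOutSite_apply, if_true]
  exact Fintype.sum_sum_update j fun a => X a a

lemma traceOutSite_traceOutSite (j : ι) (X : Matrix (ι → d) (ι → d) ℂ) :
    traceOutSite j (traceOutSite j X) = (Fintype.card d : ℂ) • traceOutSite j X := by
  ext a b
  by_cases h : a j = b j <;> simp [traceOutSite_apply, h]

end TraceOutSite

section Depolarizing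

variable {D k : ℕ} {p : ℝ}

lemma depolSite_eq_traceOutSite (j : Fin k) (X : Matrix (Fin k → Fin D) (Fin k → Fin D) ℂ) :
    depolSite D k p j X = ((1 - p : ℝ) : ℂ) • X + ((p / D : ℝ) : ℂ) • traceOutSite j X := by
  ext a b
  by_cases h : a j = b j <;> simp [depolSite, traceOutSite_apply, h]

lemma depolSite_isHermitian (j : Fin k) {X : Matrix (Fin k → Fin D) (Fin k → Fin D) ℂ}
    (hX : X.IsHermitian) : (depolSite D k p j X).IsHermitian := by
  rw [depolSite_eq_traceOutSite]
  exact (hX.smul (Complex.conj_ofReal _)).add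
    ((traceOutSite_isHermitian j hX).smul (Complex.conj_ofReal _))

lemma trace_depolSite (hD : D ≠ 0) (j : Fin k) (X : Matrix (Fin k → Fin D) (Fin k → Fin D) ℂ) :
    (depolSite D k p j X).trace = X.trace := by
  rw [depolSite_eq_traceOutSite, trace_add, trace_smul, trace_smul, trace_traceOutSite,
    Fintype.card_fin, smul_eq_mul, smul_eq_mul]
  push_cast
  field_simp
  ring

lemma one_sub_smul_eq_depolSite_sub (hD : D ≠ 0) (j : Fin k)
    (X : Matrix (Fin k → Fin D) (Fin k → Fin D) ℂ) :
    ((1 - p : ℝ) : ℂ) • X =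
      depolSite D k p j X - ((p / D : ℝ) : ℂ) • traceOutSite j (depolSite D k p j X) := by
  have hcoef : ((p / D : ℝ) : ℂ) * ((1 - p : ℝ) : ℂ) + ((p / D : ℝ) : ℂ) * ((p / D : ℝ) : ℂ) * D
      = ((p / D : ℝ) : ℂ) := by
    have hD' : (D : ℂ) ≠ 0 := Nat.cast_ne_zero.mpr hD
    push_cast
    field_simp
    ring
  rw [depolSite_eq_traceOutSite, map_add, map_smul, map_smul, traceOutSite_traceOutSite,
    Fintype.card_fin]
  linear_combination (norm := module) hcoef • traceOutSite j X

lemma one_sub_mul_traceNorm_le_depolSite (hD : D ≠ 0) (hp0 : 0 ≤ p) (hp1 : p < 1) (j : Fin k)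
    {X : Matrix (Fin k → Fin D) (Fin k → Fin D) ℂ} (hX : X.IsHermitian) :
    (1 - p) * traceNorm X ≤ (1 + p) * traceNorm (depolSite D k p j X) := by
  obtain ⟨P, N, hP, hN, hY, htn⟩ :=
    exists_posSemidef_sub_eq_traceNorm (depolSite_isHermitian (p := p) j hX)
  have hinv := one_sub_smul_eq_depolSite_sub (p := p) hD j X
  rw [hY, map_sub] at hinv
  set c : ℝ := (1 - p)⁻¹
  set q : ℝ := p / D
  have hc : 0 ≤ c := inv_nonneg.mpr (by linarith)
  have hq : 0 ≤ q := by positivity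
  have hdecomp : X = (c : ℂ) • (P + (q : ℂ) • traceOutSite j N) -
      (c : ℂ) • (N + (q : ℂ) • traceOutSite j P) := by
    have hcX : X = (c : ℂ) • ((1 - p : ℝ) : ℂ) • X := by
      rw [smul_smul, ← Complex.ofReal_mul, inv_mul_cancel₀ (by linarith), Complex.ofReal_one,
        one_smul]
    rw [hcX, hinv]
    module
  have hle := traceNorm_le_of_eq_sub
    ((hP.add ((traceOutSite_posSemidef j hN).smul (Complex.zero_le_real.mpr hq))).smul
      (Complex.zero_le_real.mpr hc))
    ((hN.add ((traceOutSite_posSemidef j hP).smul (Complex.zero_le_real.mpr hq))).smul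
      (Complex.zero_le_real.mpr hc)) hdecomp
  simp only [trace_smul, trace_add, trace_traceOutSite, Fintype.card_fin, smul_eq_mul,
    ← Complex.ofReal_natCast, Complex.re_ofReal_mul, Complex.add_re] at hle
  have hqD : q * D = p := div_mul_cancel₀ p (Nat.cast_ne_zero.mpr hD)
  rw [← le_inv_mul_iff₀ (by linarith), htn]
  calc traceNorm X ≤ _ := hle
    _ = c * ((1 + p) * (P.trace.re + N.trace.re)) := by rw [← hqD]; ring

lemma depolPow_apply (X : Matrix (Fin k → Fin D) (Fin k → Fin D) ℂ) :
    depolPow D k p X = (List.finRange k).foldl (fun Y j => depolSite D k p j Y) X := by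
  suffices ∀ (l : List (Fin k)) (Φ : Matrix (Fin k → Fin D) (Fin k → Fin D) ℂ →ₗ[ℂ] _),
      l.foldl (fun acc j => depolSite D k p j ∘ₗ acc) Φ X =
        l.foldl (fun Y j => depolSite D k p j Y) (Φ X) from this _ _
  intro l
  induction l with
  | nil => exact fun _ => rfl
  | cons j l ih => exact fun Φ => ih _

lemma depolPow_isHermitian {X : Matrix (Fin k → Fin D) (Fin k → Fin D) ℂ}
    (hX : X.IsHermitian) : (depolPow D k p X).IsHermitian := by
  rw [depolPow_apply]
  exact List.foldl_induction (fun j _ => depolSite_isHermitian j) _ hX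

lemma trace_depolPow (hD : D ≠ 0) (X : Matrix (Fin k → Fin D) (Fin k → Fin D) ℂ) :
    (depolPow D k p X).trace = X.trace := by
  rw [depolPow_apply]
  exact List.foldl_induction (P := fun Y => Y.trace = X.trace)
    (fun j Y hY => (trace_depolSite hD j Y).trans hY) _ (x := X) rfl

lemma traceNorm_le_depolPow (hD : D ≠ 0) (hp0 : 0 ≤ p) (hp : p < 1 / 2)
    {X : Matrix (Fin k → Fin D) (Fin k → Fin D) ℂ} (hX : X.IsHermitian) :
    traceNorm X ≤ (1 / (1 - 2 * p)) ^ k * traceNorm (depolPow D k p X) := by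
  have h2p : 0 < 1 - 2 * p := by linarith
  have hstep (j : Fin k) (Y : Matrix (Fin k → Fin D) (Fin k → Fin D) ℂ) (hY : Y.IsHermitian) :
      traceNorm Y ≤ 1 / (1 - 2 * p) * traceNorm (depolSite D k p j Y) := by
    have h := one_sub_mul_traceNorm_le_depolSite hD hp0 (by linarith) j hY
    rw [div_mul_eq_mul_div, one_mul, le_div_iff₀ h2p]
    nlinarith [mul_nonneg (mul_nonneg hp0 hp0) (traceNorm_nonneg Y)]
  rw [depolPow_apply]
  simpa using List.le_pow_length_mul_foldl traceNorm (by positivity)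
    (fun j _ => depolSite_isHermitian j) hstep (List.finRange k) hX

end Depolarizing

section Circuit

variable {k n : ℕ} {p : ℝ} {U : Fin n → Matrix (Fin k → Fin 2) (Fin k → Fin 2) ℂ}

lemma noisyUnitaryCircuit_sub (ρ σ : Matrix (Fin k → Fin 2) (Fin k → Fin 2) ℂ) :
    noisyUnitaryCircuit k n p U ρ - noisyUnitaryCircuit k n p U σ =
      noisyUnitaryCircuit k n p U (ρ - σ) :=
  List.foldl_sub (fun i X Y => by rw [← map_sub, mul_sub, sub_mul]) _ ρ σ

lemma noisyUnitaryCircuit_isHermitian_traceless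
    (hU : ∀ i, U i ∈ unitaryGroup (Fin k → Fin 2) ℂ)
    {X : Matrix (Fin k → Fin 2) (Fin k → Fin 2) ℂ} (hX : X.IsHermitian) (htr : X.trace = 0) :
    (noisyUnitaryCircuit k n p U X).IsHermitian ∧ (noisyUnitaryCircuit k n p U X).trace = 0 :=
  List.foldl_induction
    (P := fun Y : Matrix (Fin k → Fin 2) (Fin k → Fin 2) ℂ => Y.IsHermitian ∧ Y.trace = 0)
    (fun i _ hY => ⟨depolPow_isHermitian (isHermitian_mul_mul_conjTranspose _ hY.1),
      by rw [trace_depolPow two_ne_zero, trace_unitary_conj (hU i), hY.2]⟩) _ ⟨hX, htr⟩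

lemma traceNorm_le_noisyUnitaryCircuit (hp0 : 0 ≤ p) (hp : p < 1 / 2)
    (hU : ∀ i, U i ∈ unitaryGroup (Fin k → Fin 2) ℂ)
    {X : Matrix (Fin k → Fin 2) (Fin k → Fin 2) ℂ} (hX : X.IsHermitian) :
    traceNorm X ≤ (1 / (1 - 2 * p)) ^ (k * n) * traceNorm (noisyUnitaryCircuit k n p U X) := by
  have hc : 0 ≤ 1 / (1 - 2 * p) := by rw [one_div_nonneg]; linarith
  have hlayer (i : Fin n) (Y : Matrix (Fin k → Fin 2) (Fin k → Fin 2) ℂ) (hY : Y.IsHermitian) :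
      traceNorm Y ≤ (1 / (1 - 2 * p)) ^ k * traceNorm (depolPow 2 k p (U i * Y * (U i)ᴴ)) := by
    rw [← traceNorm_unitary_conj (hU i) hY]
    exact traceNorm_le_depolPow two_ne_zero hp0 hp (isHermitian_mul_mul_conjTranspose _ hY)
  have h := List.le_pow_length_mul_foldl traceNorm (pow_nonneg hc k)
    (fun i _ hY => depolPow_isHermitian (isHermitian_mul_mul_conjTranspose _ hY)) hlayer
    (List.finRange n) hX
  rwa [List.length_finRange, ← pow_mul] at h

end Circuit

/-- Lower bound on trace-distance contraction under local qubit depolarizing noise, and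
the resulting lower bound on the trace distance of the outputs of a noisy unitary
circuit. -/
theorem traceNorm_lower_bound_depolPow (k n : ℕ) (p : ℝ) (hp0 : 0 ≤ p) (hp : p < 1 / 2)
    (U : Fin n → Matrix (Fin k → Fin 2) (Fin k → Fin 2) ℂ)
    (hU : ∀ i, U i ∈ Matrix.unitaryGroup (Fin k → Fin 2) ℂ) :
    (∀ ρ σ : Matrix (Fin k → Fin 2) (Fin k → Fin 2) ℂ, IsDensity ρ → IsDensity σ →
      traceNorm (ρ - σ) ≤
        (1 / (1 - 2 * p)) ^ k * traceNorm (depolPow 2 k p ρ - depolPow 2 k p σ)) ∧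
    (∀ ρ σ : Matrix (Fin k → Fin 2) (Fin k → Fin 2) ℂ, IsDensity ρ → IsDensity σ →
      (1 / 2) * (1 - 2 * p) ^ (k * n) * traceNorm (ρ - σ) ≤
        hsDiv 1 (noisyUnitaryCircuit k n p U ρ) (noisyUnitaryCircuit k n p U σ)) := by
  refine ⟨fun ρ σ hρ hσ => ?_, fun ρ σ hρ hσ => ?_⟩
  · rw [← map_sub]
    exact traceNorm_le_depolPow two_ne_zero hp0 hp (hρ.1.1.sub hσ.1.1)
  · have hX : (ρ - σ).IsHermitian := hρ.1.1.sub hσ.1.1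
    have htr : (ρ - σ).trace = 0 := by rw [trace_sub, hρ.2, hσ.2, sub_self]
    obtain ⟨hAh, hAtr⟩ := noisyUnitaryCircuit_isHermitian_traceless (p := p) hU hX htr
    have hle := traceNorm_le_noisyUnitaryCircuit hp0 hp hU hX
    rw [one_div, inv_pow, ← div_eq_inv_mul, le_div_iff₀' (pow_pos (by linarith) _)] at hle
    rw [hsDiv, Complex.ofReal_one, one_smul, noisyUnitaryCircuit_sub, posPartTrace_eq hAh, hAtr,
      Complex.zero_re, add_zero]
    linarith
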